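/- Let c : (0,∞)² → ℂ be smooth and suppose that [ (D_1 − d)² − (D_2 + εL)² − (η_1/a_1)² ] c = 0 identically on (0,∞)², where D_1 := ∂_1 + c_1 − εu and D_2 := ∂_2 + c_2 + εu. Then the function f : (0,∞) × J → ℂ defined by f(Φ(a_1,a_2)) := a_1^{c_1−d} a_2^{c_2+εL} exp(−ε u(a_1,a_2)) c(a_1,a_2) is smooth and satisfies (∂_{t_1}² − ∂_{t_2}² − t_1²) f = 0 identically on (0,∞) × J. -/

import Mathlib

/-- The Euler operator `∂₁ = a₁ ∂/∂a₁` in the first variable. -/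
noncomputable def euler1 (g : ℝ → ℝ → ℂ) : ℝ → ℝ → ℂ :=
  fun x y => (x : ℂ) * deriv (fun x' => g x' y) x

/-- The Euler operator `∂₂ = a₂ ∂/∂a₂` in the second variable. -/
noncomputable def euler2 (g : ℝ → ℝ → ℂ) : ℝ → ℝ → ℂ :=
  fun x y => (y : ℂ) * deriv (fun y' => g x y') y

/-- `D₁ := ∂₁ + c₁ − εu`, where `u(a₁,a₂) = η₂a₁/(2a₂)`. -/
noncomputable def D1op (η₂ ε c₁ : ℝ) (g : ℝ → ℝ → ℂ) : ℝ → ℝ → ℂ :=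
  fun a₁ a₂ => euler1 g a₁ a₂ + ((c₁ - ε * (η₂ * a₁ / (2 * a₂)) : ℝ) : ℂ) * g a₁ a₂

/-- `D₂ := ∂₂ + c₂ + εu`, where `u(a₁,a₂) = η₂a₁/(2a₂)`. -/
noncomputable def D2op (η₂ ε c₂ : ℝ) (g : ℝ → ℝ → ℂ) : ℝ → ℝ → ℂ :=
  fun a₁ a₂ => euler2 g a₁ a₂ + ((c₂ + ε * (η₂ * a₁ / (2 * a₂)) : ℝ) : ℂ) * g a₁ a₂

/-- `T + r` : add the constant-multiplication operator `r` to the operator `T`. -/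
noncomputable def addConst (T : (ℝ → ℝ → ℂ) → (ℝ → ℝ → ℂ)) (r : ℝ)
    (g : ℝ → ℝ → ℂ) : ℝ → ℝ → ℂ :=
  fun x y => T g x y + (r : ℂ) * g x y

/-!
Inversion turns Euler operators into their negatives: `t ∂_t [g(κ/t)] = -(a ∂_a g)(κ/t)`, so
`∂_{t₁}²` and `∂_{t₂}²` pull back along `Φ⁻¹` to `∂₁²` and `∂₂²`. Multiplication by the weight
`w = a₁^{c₁-d} a₂^{c₂+εL} e^{-εu}` conjugates `∂₁` into `D₁ - d` and `∂₂` into `D₂ + εL`, because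
`∂₁ u = u` and `∂₂ u = -u`. Since `t₁ = η₁/a₁`, the operator `∂_{t₁}² - ∂_{t₂}² - t₁²` applied to
`f` is the pullback of `w · [(D₁ - d)² - (D₂ + εL)² - (η₁/a₁)²] c = 0`.
-/

open Set Function Filter Topology

section EulerOperators

lemma euler1_neg (g : ℝ → ℝ → ℂ) : euler1 (-g) = -euler1 g := by
  ext x y
  simp only [euler1, Pi.neg_apply, deriv.fun_neg, mul_neg]

lemma euler2_neg (g : ℝ → ℝ → ℂ) : euler2 (-g) = -euler2 g := by
  ext x y
  simp only [euler2, Pi.neg_apply, deriv.fun_neg, mul_neg]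

variable {f g : ℝ → ℝ → ℂ} {U : Set (ℝ × ℝ)}

lemma eqOn_euler1 (hU : IsOpen U) (h : EqOn (uncurry f) (uncurry g) U) :
    EqOn (uncurry (euler1 f)) (uncurry (euler1 g)) U := by
  rintro ⟨x, y⟩ hp
  have hnear : ∀ᶠ x' in 𝓝 x, (x', y) ∈ U :=
    (Continuous.prodMk_left y).continuousAt.preimage_mem_nhds (hU.mem_nhds hp)
  have hslice : (fun x' => f x' y) =ᶠ[𝓝 x] fun x' => g x' y := hnear.mono fun x' hx' => h hx'
  simp only [uncurry_apply_pair, euler1, hslice.deriv_eq]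

lemma eqOn_euler2 (hU : IsOpen U) (h : EqOn (uncurry f) (uncurry g) U) :
    EqOn (uncurry (euler2 f)) (uncurry (euler2 g)) U := by
  rintro ⟨x, y⟩ hp
  have hnear : ∀ᶠ y' in 𝓝 y, (x, y') ∈ U :=
    (Continuous.prodMk_right x).continuousAt.preimage_mem_nhds (hU.mem_nhds hp)
  have hslice : (fun y' => f x y') =ᶠ[𝓝 y] fun y' => g x y' := hnear.mono fun y' hy' => h hy'
  simp only [uncurry_apply_pair, euler2, hslice.deriv_eq]

lemma eqOn_euler1_euler1 {h : ℝ → ℝ → ℂ} (hU : IsOpen U)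
    (hf : EqOn (uncurry (euler1 f)) (uncurry (-g)) U)
    (hg : EqOn (uncurry (euler1 g)) (uncurry (-h)) U) :
    EqOn (uncurry (euler1 (euler1 f))) (uncurry h) U := by
  intro p hp
  rw [eqOn_euler1 hU hf hp, euler1_neg]
  exact (congrArg Neg.neg (hg hp)).trans (neg_neg _)

lemma eqOn_euler2_euler2 {h : ℝ → ℝ → ℂ} (hU : IsOpen U)
    (hf : EqOn (uncurry (euler2 f)) (uncurry (-g)) U)
    (hg : EqOn (uncurry (euler2 g)) (uncurry (-h)) U) :
    EqOn (uncurry (euler2 (euler2 f))) (uncurry h) U := by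
  intro p hp
  rw [eqOn_euler2 hU hf hp, euler2_neg]
  exact (congrArg Neg.neg (hg hp)).trans (neg_neg _)

lemma DifferentiableAt.hasDerivAt_slice_fst {x y : ℝ} (h : DifferentiableAt ℝ (uncurry g) (x, y)) :
    HasDerivAt (fun x' => g x' y) (fderiv ℝ (uncurry g) (x, y) (1, 0)) x := by
  have hline : HasDerivAt (fun x' : ℝ => (x', y)) ((1 : ℝ), (0 : ℝ)) x :=
    (hasDerivAt_id x).prodMk (hasDerivAt_const x y)
  exact h.hasFDerivAt.comp_hasDerivAt x hline

lemma DifferentiableAt.hasDerivAt_slice_snd {x y : ℝ} (h : DifferentiableAt ℝ (uncurry g) (x, y)) :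
    HasDerivAt (fun y' => g x y') (fderiv ℝ (uncurry g) (x, y) (0, 1)) y := by
  have hline : HasDerivAt (fun y' : ℝ => (x, y')) ((0 : ℝ), (1 : ℝ)) y :=
    (hasDerivAt_const y x).prodMk (hasDerivAt_id y)
  exact h.hasFDerivAt.comp_hasDerivAt y hline

lemma contDiffOn_euler1 (hU : IsOpen U) (hg : ContDiffOn ℝ (⊤ : ℕ∞) (uncurry g) U) :
    ContDiffOn ℝ (⊤ : ℕ∞) (uncurry (euler1 g)) U := by
  have hdg : ContDiffOn ℝ (⊤ : ℕ∞) (fun p => fderiv ℝ (uncurry g) p (1, 0)) U :=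
    (ContinuousLinearMap.apply ℝ ℂ ((1 : ℝ), (0 : ℝ))).contDiff.comp_contDiffOn
      (hg.fderiv_of_isOpen hU le_rfl)
  refine ((Complex.ofRealCLM.contDiff.comp contDiff_fst).contDiffOn.mul hdg).congr ?_
  rintro ⟨x, y⟩ hp
  have hd := ((hg.contDiffAt (hU.mem_nhds hp)).differentiableAt (by simp)).hasDerivAt_slice_fst
  simp only [uncurry_apply_pair, euler1, hd.deriv, comp_apply, Complex.ofRealCLM_apply]

lemma contDiffOn_euler2 (hU : IsOpen U) (hg : ContDiffOn ℝ (⊤ : ℕ∞) (uncurry g) U) :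
    ContDiffOn ℝ (⊤ : ℕ∞) (uncurry (euler2 g)) U := by
  have hdg : ContDiffOn ℝ (⊤ : ℕ∞) (fun p => fderiv ℝ (uncurry g) p (0, 1)) U :=
    (ContinuousLinearMap.apply ℝ ℂ ((0 : ℝ), (1 : ℝ))).contDiff.comp_contDiffOn
      (hg.fderiv_of_isOpen hU le_rfl)
  refine ((Complex.ofRealCLM.contDiff.comp contDiff_snd).contDiffOn.mul hdg).congr ?_
  rintro ⟨x, y⟩ hp
  have hd := ((hg.contDiffAt (hU.mem_nhds hp)).differentiableAt (by simp)).hasDerivAt_slice_snd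
  simp only [uncurry_apply_pair, euler2, hd.deriv, comp_apply, Complex.ofRealCLM_apply]

end EulerOperators

section Inversion

noncomputable def invPullback (κ μ : ℝ) (G : ℝ → ℝ → ℂ) : ℝ → ℝ → ℂ :=
  fun s t => G (κ / s) (μ / t)

variable {κ μ x y : ℝ} {G : ℝ → ℝ → ℂ}

lemma euler1_invPullback (hx : x ≠ 0) (hG : DifferentiableAt ℝ (fun a => G a (μ / y)) (κ / x)) :
    euler1 (invPullback κ μ G) x y = -invPullback κ μ (euler1 G) x y := by
  have hinv : HasDerivAt (fun s : ℝ => κ / s) (κ * -(x ^ 2)⁻¹) x := by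
    simpa only [div_eq_mul_inv] using (hasDerivAt_inv hx).const_mul κ
  have hx' : (x : ℂ) ≠ 0 := by exact_mod_cast hx
  have hd : HasDerivAt (fun s => G (κ / s) (μ / y))
      ((κ * -(x ^ 2)⁻¹) • deriv (fun a => G a (μ / y)) (κ / x)) x :=
    hG.hasDerivAt.scomp x hinv
  simp only [euler1, invPullback, hd.deriv, Complex.real_smul]
  push_cast
  field_simp

lemma euler2_invPullback (hy : y ≠ 0) (hG : DifferentiableAt ℝ (fun b => G (κ / x) b) (μ / y)) :
    euler2 (invPullback κ μ G) x y = -invPullback κ μ (euler2 G) x y :=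
  euler1_invPullback (G := flip G) hy hG

lemma contDiffOn_invPullback {U : Set (ℝ × ℝ)}
    (hG : ContDiffOn ℝ (⊤ : ℕ∞) (uncurry G) (Ioi 0 ×ˢ Ioi 0))
    (hU : MapsTo (fun p : ℝ × ℝ => (κ / p.1, μ / p.2)) U (Ioi 0 ×ˢ Ioi 0)) :
    ContDiffOn ℝ (⊤ : ℕ∞) (uncurry (invPullback κ μ G)) U := by
  have hne : ∀ p ∈ U, p.1 ≠ 0 ∧ p.2 ≠ 0 := fun p hp =>
    ⟨(div_ne_zero_iff.mp (hU hp).1.ne').2, (div_ne_zero_iff.mp (hU hp).2.ne').2⟩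
  exact hG.comp ((contDiffOn_const.div contDiffOn_fst fun p hp => (hne p hp).1).prodMk
    (contDiffOn_const.div contDiffOn_snd fun p hp => (hne p hp).2)) hU

end Inversion

section Weight

noncomputable def weight (α β η₂ ε a b : ℝ) : ℝ :=
  a ^ α * b ^ β * Real.exp (-ε * (η₂ * a / (2 * b)))

noncomputable def weighted (α β η₂ ε : ℝ) (h : ℝ → ℝ → ℂ) : ℝ → ℝ → ℂ :=
  fun a b => (weight α β η₂ ε a b : ℂ) * h a b

variable {α β η₂ ε a b : ℝ}

lemma hasDerivAt_weight_fst (ha : a ≠ 0) :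
    HasDerivAt (fun a => weight α β η₂ ε a b)
      (weight α β η₂ ε a b * (α / a - ε * η₂ / (2 * b))) a := by
  have hexp : HasDerivAt (fun a => Real.exp (-ε * (η₂ * a / (2 * b))))
      (Real.exp (-ε * (η₂ * a / (2 * b))) * (-ε * (η₂ * 1 / (2 * b)))) a :=
    ((((hasDerivAt_id a).const_mul η₂).div_const (2 * b)).const_mul (-ε)).exp
  refine (((Real.hasDerivAt_rpow_const (p := α) (Or.inl ha)).mul_const (b ^ β)).mul
    hexp).congr_deriv ?_
  rw [weight, Real.rpow_sub_one ha]
  field_simp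
  ring

lemma hasDerivAt_weight_snd (hb : b ≠ 0) :
    HasDerivAt (fun b => weight α β η₂ ε a b)
      (weight α β η₂ ε a b * (β / b + ε * η₂ * a / (2 * b ^ 2))) b := by
  have hexp : HasDerivAt (fun b => Real.exp (-ε * (η₂ * a / 2) * b⁻¹))
      (Real.exp (-ε * (η₂ * a / 2) * b⁻¹) * (-ε * (η₂ * a / 2) * -(b ^ 2)⁻¹)) b :=
    ((hasDerivAt_inv hb).const_mul _).exp
  have hform : ∀ b : ℝ, -ε * (η₂ * a / (2 * b)) = -ε * (η₂ * a / 2) * b⁻¹ := fun b => by ring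
  simp only [weight, hform]
  refine (((Real.hasDerivAt_rpow_const (p := β) (Or.inl hb)).const_mul (a ^ α)).mul
    hexp).congr_deriv ?_
  rw [Real.rpow_sub_one hb]
  field_simp

lemma contDiffOn_weighted {h : ℝ → ℝ → ℂ}
    (hh : ContDiffOn ℝ (⊤ : ℕ∞) (uncurry h) (Ioi 0 ×ˢ Ioi 0)) :
    ContDiffOn ℝ (⊤ : ℕ∞) (uncurry (weighted α β η₂ ε h)) (Ioi 0 ×ˢ Ioi 0) := by
  have hw : ContDiffOn ℝ (⊤ : ℕ∞) (fun p : ℝ × ℝ => weight α β η₂ ε p.1 p.2)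
      (Ioi 0 ×ˢ Ioi 0) := by
    unfold weight
    fun_prop (disch := rintro p ⟨h₁ : 0 < p.1, h₂ : 0 < p.2⟩; simp [h₁.ne', h₂.ne'])
  exact (Complex.ofRealCLM.contDiff.comp_contDiffOn hw).mul hh

end Weight

section Conjugation

variable {η₂ ε c₁ c₂ d L α β x y : ℝ} {h : ℝ → ℝ → ℂ}

lemma euler1_weighted (hx : x ≠ 0) (hh : DifferentiableAt ℝ (fun a => h a y) x) :
    euler1 (weighted (c₁ - d) β η₂ ε h) x y
      = weighted (c₁ - d) β η₂ ε (addConst (D1op η₂ ε c₁) (-d) h) x y := by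
  have hd : HasDerivAt (fun a => (weight (c₁ - d) β η₂ ε a y : ℂ) * h a y) _ x :=
    (hasDerivAt_weight_fst hx).ofReal_comp.mul hh.hasDerivAt
  have hx' : (x : ℂ) ≠ 0 := by exact_mod_cast hx
  simp only [euler1, weighted, addConst, D1op, hd.deriv]
  push_cast
  field_simp
  ring

lemma euler2_weighted (hy : y ≠ 0) (hh : DifferentiableAt ℝ (fun b => h x b) y) :
    euler2 (weighted α (c₂ + ε * L) η₂ ε h) x y
      = weighted α (c₂ + ε * L) η₂ ε (addConst (D2op η₂ ε c₂) (ε * L) h) x y := by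
  have hd : HasDerivAt (fun b => (weight α (c₂ + ε * L) η₂ ε x b : ℂ) * h x b) _ y :=
    (hasDerivAt_weight_snd hy).ofReal_comp.mul hh.hasDerivAt
  have hy' : (y : ℂ) ≠ 0 := by exact_mod_cast hy
  simp only [euler2, weighted, addConst, D2op, hd.deriv]
  push_cast
  field_simp
  ring

lemma contDiffOn_addConst_D1op (r : ℝ) (hh : ContDiffOn ℝ (⊤ : ℕ∞) (uncurry h) (Ioi 0 ×ˢ Ioi 0)) :
    ContDiffOn ℝ (⊤ : ℕ∞) (uncurry (addConst (D1op η₂ ε c₁) r h)) (Ioi 0 ×ˢ Ioi 0) := by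
  have hcoef : ContDiffOn ℝ (⊤ : ℕ∞)
      (fun p : ℝ × ℝ => c₁ - ε * (η₂ * p.1 / (2 * p.2))) (Ioi 0 ×ˢ Ioi 0) := by
    fun_prop (disch := rintro p ⟨-, h₂ : 0 < p.2⟩; simp [h₂.ne'])
  have hcoefC := Complex.ofRealCLM.contDiff.comp_contDiffOn hcoef
  exact ((contDiffOn_euler1 (isOpen_Ioi.prod isOpen_Ioi) hh).add (hcoefC.mul hh)).add
    (contDiffOn_const.mul hh)

lemma contDiffOn_addConst_D2op (r : ℝ) (hh : ContDiffOn ℝ (⊤ : ℕ∞) (uncurry h) (Ioi 0 ×ˢ Ioi 0)) :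
    ContDiffOn ℝ (⊤ : ℕ∞) (uncurry (addConst (D2op η₂ ε c₂) r h)) (Ioi 0 ×ˢ Ioi 0) := by
  have hcoef : ContDiffOn ℝ (⊤ : ℕ∞)
      (fun p : ℝ × ℝ => c₂ + ε * (η₂ * p.1 / (2 * p.2))) (Ioi 0 ×ˢ Ioi 0) := by
    fun_prop (disch := rintro p ⟨-, h₂ : 0 < p.2⟩; simp [h₂.ne'])
  have hcoefC := Complex.ofRealCLM.contDiff.comp_contDiffOn hcoef
  exact ((contDiffOn_euler2 (isOpen_Ioi.prod isOpen_Ioi) hh).add (hcoefC.mul hh)).add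
    (contDiffOn_const.mul hh)

end Conjugation

section Intertwining

variable {κ μ η₂ ε c₁ c₂ d L α β : ℝ} {c : ℝ → ℝ → ℂ} {U : Set (ℝ × ℝ)}

lemma eqOn_euler1_invPullback_weighted
    (hc : ContDiffOn ℝ (⊤ : ℕ∞) (uncurry c) (Ioi 0 ×ˢ Ioi 0))
    (hU : MapsTo (fun p : ℝ × ℝ => (κ / p.1, μ / p.2)) U (Ioi 0 ×ˢ Ioi 0)) :
    EqOn (uncurry (euler1 (invPullback κ μ (weighted (c₁ - d) β η₂ ε c))))
      (uncurry (-invPullback κ μ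
        (weighted (c₁ - d) β η₂ ε (addConst (D1op η₂ ε c₁) (-d) c)))) U := by
  rintro ⟨s, t⟩ hp
  obtain ⟨ha, hb⟩ := hU hp
  have hslice : ∀ {g : ℝ → ℝ → ℂ}, ContDiffOn ℝ (⊤ : ℕ∞) (uncurry g) (Ioi 0 ×ˢ Ioi 0) →
      DifferentiableAt ℝ (fun a => g a (μ / t)) (κ / s) := fun hg =>
    ((hg.contDiffAt ((isOpen_Ioi.prod isOpen_Ioi).mem_nhds ⟨ha, hb⟩)).differentiableAt
      (by simp)).hasDerivAt_slice_fst.differentiableAt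
  simp only [uncurry_apply_pair, Pi.neg_apply]
  rw [euler1_invPullback (div_ne_zero_iff.mp ha.ne').2 (hslice (contDiffOn_weighted hc)),
    invPullback, invPullback, euler1_weighted ha.ne' (hslice hc)]

lemma eqOn_euler2_invPullback_weighted
    (hc : ContDiffOn ℝ (⊤ : ℕ∞) (uncurry c) (Ioi 0 ×ˢ Ioi 0))
    (hU : MapsTo (fun p : ℝ × ℝ => (κ / p.1, μ / p.2)) U (Ioi 0 ×ˢ Ioi 0)) :
    EqOn (uncurry (euler2 (invPullback κ μ (weighted α (c₂ + ε * L) η₂ ε c))))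
      (uncurry (-invPullback κ μ
        (weighted α (c₂ + ε * L) η₂ ε (addConst (D2op η₂ ε c₂) (ε * L) c)))) U := by
  rintro ⟨s, t⟩ hp
  obtain ⟨ha, hb⟩ := hU hp
  have hslice : ∀ {g : ℝ → ℝ → ℂ}, ContDiffOn ℝ (⊤ : ℕ∞) (uncurry g) (Ioi 0 ×ˢ Ioi 0) →
      DifferentiableAt ℝ (fun b => g (κ / s) b) (μ / t) := fun hg =>
    ((hg.contDiffAt ((isOpen_Ioi.prod isOpen_Ioi).mem_nhds ⟨ha, hb⟩)).differentiableAt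
      (by simp)).hasDerivAt_slice_snd.differentiableAt
  simp only [uncurry_apply_pair, Pi.neg_apply]
  rw [euler2_invPullback (div_ne_zero_iff.mp hb.ne').2 (hslice (contDiffOn_weighted hc)),
    invPullback, invPullback, euler2_weighted hb.ne' (hslice hc)]

lemma eqOn_euler1_euler1_invPullback_weighted (hU : IsOpen U)
    (hc : ContDiffOn ℝ (⊤ : ℕ∞) (uncurry c) (Ioi 0 ×ˢ Ioi 0))
    (hUmaps : MapsTo (fun p : ℝ × ℝ => (κ / p.1, μ / p.2)) U (Ioi 0 ×ˢ Ioi 0)) :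
    EqOn (uncurry (euler1 (euler1 (invPullback κ μ (weighted (c₁ - d) β η₂ ε c)))))
      (uncurry (invPullback κ μ (weighted (c₁ - d) β η₂ ε
        (addConst (D1op η₂ ε c₁) (-d) (addConst (D1op η₂ ε c₁) (-d) c))))) U :=
  eqOn_euler1_euler1 hU (eqOn_euler1_invPullback_weighted hc hUmaps)
    (eqOn_euler1_invPullback_weighted (contDiffOn_addConst_D1op (-d) hc) hUmaps)

lemma eqOn_euler2_euler2_invPullback_weighted (hU : IsOpen U)
    (hc : ContDiffOn ℝ (⊤ : ℕ∞) (uncurry c) (Ioi 0 ×ˢ Ioi 0))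
    (hUmaps : MapsTo (fun p : ℝ × ℝ => (κ / p.1, μ / p.2)) U (Ioi 0 ×ˢ Ioi 0)) :
    EqOn (uncurry (euler2 (euler2 (invPullback κ μ (weighted α (c₂ + ε * L) η₂ ε c)))))
      (uncurry (invPullback κ μ (weighted α (c₂ + ε * L) η₂ ε
        (addConst (D2op η₂ ε c₂) (ε * L) (addConst (D2op η₂ ε c₂) (ε * L) c))))) U :=
  eqOn_euler2_euler2 hU (eqOn_euler2_invPullback_weighted hc hUmaps)
    (eqOn_euler2_invPullback_weighted (contDiffOn_addConst_D2op (ε * L) hc) hUmaps)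

lemma euler1_euler1_sub_euler2_euler2_of_eqOn {f : ℝ → ℝ → ℂ} (hU : IsOpen U)
    (hc : ContDiffOn ℝ (⊤ : ℕ∞) (uncurry c) (Ioi 0 ×ˢ Ioi 0))
    (hUmaps : MapsTo (fun p : ℝ × ℝ => (κ / p.1, μ / p.2)) U (Ioi 0 ×ˢ Ioi 0))
    (hfc : EqOn (uncurry f)
      (uncurry (invPullback κ μ (weighted (c₁ - d) (c₂ + ε * L) η₂ ε c))) U)
    {t₁ t₂ : ℝ} (ht : (t₁, t₂) ∈ U) :
    euler1 (euler1 f) t₁ t₂ - euler2 (euler2 f) t₁ t₂ - (t₁ : ℂ) ^ 2 * f t₁ t₂ =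
      weight (c₁ - d) (c₂ + ε * L) η₂ ε (κ / t₁) (μ / t₂) *
        (addConst (D1op η₂ ε c₁) (-d) (addConst (D1op η₂ ε c₁) (-d) c) (κ / t₁) (μ / t₂)
          - addConst (D2op η₂ ε c₂) (ε * L) (addConst (D2op η₂ ε c₂) (ε * L) c)
              (κ / t₁) (μ / t₂)
          - (((κ / (κ / t₁)) ^ 2 : ℝ) : ℂ) * c (κ / t₁) (μ / t₂)) := by
  have h11 := ((eqOn_euler1 hU (eqOn_euler1 hU hfc)).trans
    (eqOn_euler1_euler1_invPullback_weighted hU hc hUmaps)) ht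
  have h22 := ((eqOn_euler2 hU (eqOn_euler2 hU hfc)).trans
    (eqOn_euler2_euler2_invPullback_weighted hU hc hUmaps)) ht
  have h00 := hfc ht
  simp only [uncurry_apply_pair, invPullback, weighted] at h11 h22 h00
  rw [h11, h22, h00, div_div_cancel₀ (div_ne_zero_iff.mp (hUmaps ht).1.ne').1]
  push_cast
  ring

end Intertwining

lemma div_pos_of_mem_ite {μ s t : ℝ} (hμ : μ * s < 0)
    (ht : t ∈ if s < 0 then Ioi (0 : ℝ) else Iio 0) : 0 < μ / t := by
  split_ifs at ht with hs
  · exact div_pos (pos_of_mul_neg_left hμ hs.le) ht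
  · exact div_pos_of_neg_of_neg (neg_of_mul_neg_left hμ (not_lt.mp hs)) ht

/-- **Change of variables for the first scalar equation**
(Proposition 5.16 / 5.20(6) of the paper).  If `c` is smooth on `(0,∞)²` and satisfies
`[(D₁−d)² − (D₂+εL)² − (η₁/a₁)²] c = 0` there, then
`f(Φ(a₁,a₂)) := a₁^{c₁−d} a₂^{c₂+εL} e^{−εu} c(a₁,a₂)` is smooth on `(0,∞) × J` and
satisfies `(∂_{t₁}² − ∂_{t₂}² − t₁²) f = 0` there, where
`Φ(a₁,a₂) = (η₁/a₁, −εη₁η₂/(2a₂))` and `J = (0,∞)` if `εη₂ < 0`, `J = (−∞,0)` otherwise. -/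
theorem stmt12 (η₁ η₂ ε c₁ c₂ d L : ℝ) (hη₁ : 0 < η₁) (hη₂ : η₂ ≠ 0)
    (hε : ε = 1 ∨ ε = -1)
    (c : ℝ → ℝ → ℂ)
    (hc : ContDiffOn ℝ (⊤ : ℕ∞) (Function.uncurry c) (Set.Ioi 0 ×ˢ Set.Ioi 0))
    (heq : ∀ a₁ a₂ : ℝ, 0 < a₁ → 0 < a₂ →
      addConst (D1op η₂ ε c₁) (-d) (addConst (D1op η₂ ε c₁) (-d) c) a₁ a₂
      - addConst (D2op η₂ ε c₂) (ε * L) (addConst (D2op η₂ ε c₂) (ε * L) c) a₁ a₂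
      - (((η₁ / a₁) ^ 2 : ℝ) : ℂ) * c a₁ a₂ = 0)
    (f : ℝ → ℝ → ℂ)
    (hf : ∀ a₁ a₂ : ℝ, 0 < a₁ → 0 < a₂ →
      f (η₁ / a₁) (-ε * η₁ * η₂ / (2 * a₂)) =
        ((a₁ ^ (c₁ - d) * a₂ ^ (c₂ + ε * L) *
          Real.exp (-ε * (η₂ * a₁ / (2 * a₂))) : ℝ) : ℂ) * c a₁ a₂) :
    ContDiffOn ℝ (⊤ : ℕ∞) (Function.uncurry f)
      (Set.Ioi 0 ×ˢ (if ε * η₂ < 0 then Set.Ioi (0 : ℝ) else Set.Iio 0)) ∧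
    ∀ t₁ t₂ : ℝ, 0 < t₁ →
      t₂ ∈ (if ε * η₂ < 0 then Set.Ioi (0 : ℝ) else Set.Iio 0) →
      euler1 (euler1 f) t₁ t₂ - euler2 (euler2 f) t₁ t₂
        - ((t₁ : ℂ)) ^ 2 * f t₁ t₂ = 0 := by
  -- `Φ⁻¹(t₁, t₂) = (η₁ / t₁, k / t₂)`
  set k := -ε * η₁ * η₂ / 2
  set U : Set (ℝ × ℝ) := Ioi 0 ×ˢ (if ε * η₂ < 0 then Ioi 0 else Iio 0)
  have hεη₂ : ε * η₂ ≠ 0 := mul_ne_zero (by rcases hε with rfl | rfl <;> norm_num) hη₂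
  have hk : k * (ε * η₂) < 0 := by
    simp only [k]
    nlinarith [mul_pos hη₁ (sq_pos_of_ne_zero hεη₂)]
  have hU : IsOpen U := isOpen_Ioi.prod (by split_ifs; exacts [isOpen_Ioi, isOpen_Iio])
  have hmaps : MapsTo (fun p : ℝ × ℝ => (η₁ / p.1, k / p.2)) U (Ioi 0 ×ˢ Ioi 0) :=
    fun p hp => ⟨div_pos hη₁ hp.1, div_pos_of_mem_ite hk hp.2⟩
  have hfc : EqOn (uncurry f)
      (uncurry (invPullback η₁ k (weighted (c₁ - d) (c₂ + ε * L) η₂ ε c))) U := by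
    rintro ⟨t₁, t₂⟩ hp
    have h := hf _ _ (hmaps hp).1 (hmaps hp).2
    rw [show -ε * η₁ * η₂ / (2 * (k / t₂)) = k / (k / t₂) by ring, div_div_cancel₀ hη₁.ne',
      div_div_cancel₀ (left_ne_zero_of_mul hk.ne)] at h
    exact h
  refine ⟨(contDiffOn_invPullback (contDiffOn_weighted hc) hmaps).congr hfc, ?_⟩
  intro t₁ t₂ ht₁ ht₂
  have hp : (t₁, t₂) ∈ U := ⟨ht₁, ht₂⟩
  rw [euler1_euler1_sub_euler2_euler2_of_eqOn hU hc hmaps hfc hp,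
    heq _ _ (hmaps hp).1 (hmaps hp).2, mul_zero]
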